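/- Let m ≥ 1, r ≥ 0, and (h_n) satisfy |h_n| ≤ M (log n)^r / n^{(m+3)/2} for n ≥ 2, |h_0|,|h_1| ≤ M, and ∑_{n≥0} h_n = 0. Then ∑_{n=0}^∞ [s^n](H(s)/√(1-s)) = 0, i.e. ∑_{n=0}^N ∑_{k=0}^n a_k^{(1)} h_{n-k} → 0 as N → ∞, where a_k^{(1)} = (-1)^k C(-1/2, k). -/

import Mathlib

/-- `a n^{(1)} = (-1)^n * C(-1/2, n)`, the coefficients of `(1-s)^{-1/2}`. -/
noncomputable def aOne (n : ℕ) : ℝ :=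
  (-1 : ℝ) ^ n * (∏ i ∈ Finset.range n, ((-1 : ℝ) / 2 - i)) / (Nat.factorial n)

open Real Finset
set_option maxHeartbeats 1000000

lemma aOne_zero : aOne 0 = 1 := by simp [aOne]

lemma aOne_succ (k : ℕ) :
    aOne (k + 1) = aOne k * ((2 * k + 1) / (2 * k + 2)) := by
  unfold aOne
  rw [Finset.prod_range_succ, Nat.factorial_succ]
  push_cast
  field_simp
  ring

lemma aOne_nonneg (k : ℕ) : 0 ≤ aOne k := by
  induction k with
  | zero => rw [aOne_zero]; norm_num
  | succ k ih =>
    rw [aOne_succ]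
    apply mul_nonneg ih
    positivity

lemma aOne_le_sqrt (k : ℕ) : aOne k ≤ 1 / Real.sqrt (k + 1) := by
  induction k with
  | zero => rw [aOne_zero]; simp
  | succ k ih =>
    rw [aOne_succ]
    have h1 : (0:ℝ) < Real.sqrt (k + 1) := Real.sqrt_pos.2 (by positivity)
    have h2 : (0:ℝ) < Real.sqrt ((k:ℝ) + 1 + 1) := Real.sqrt_pos.2 (by positivity)
    have e1 : Real.sqrt ((k:ℝ)+1) ^ 2 = (k:ℝ) + 1 := Real.sq_sqrt (by positivity)
    have e2 : Real.sqrt ((k:ℝ)+1+1) ^ 2 = (k:ℝ) + 1 + 1 := Real.sq_sqrt (by positivity)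
    have hfrac : (0:ℝ) ≤ (2 * k + 1) / (2 * k + 2) := by positivity
    calc aOne k * ((2 * k + 1) / (2 * k + 2))
        ≤ (1 / Real.sqrt (k + 1)) * ((2 * k + 1) / (2 * k + 2)) := by
          exact mul_le_mul_of_nonneg_right ih hfrac
      _ ≤ 1 / Real.sqrt ((k:ℝ) + 1 + 1) := by
          rw [div_mul_eq_mul_div, one_mul, div_div, div_le_div_iff₀ (by positivity) h2]
          rw [one_mul]
          nlinarith [e1, e2, h1.le, h2.le, sq_nonneg (Real.sqrt ((k:ℝ)+1) - Real.sqrt ((k:ℝ)+1+1)),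
            mul_pos h1 h2]
      _ = 1 / Real.sqrt ((k + 1 : ℕ) + 1) := by push_cast; ring_nf


lemma swap_sum (g : ℕ → ℝ) (N : ℕ) :
    ∑ n ∈ Finset.range (N + 1), ∑ k ∈ Finset.range (n + 1), aOne k * g (n - k)
      = ∑ k ∈ Finset.range (N + 1), aOne k * (∑ i ∈ Finset.range (N - k + 1), g i) := by
  induction N with
  | zero => simp
  | succ N ih =>
    rw [Finset.sum_range_succ, ih]
    rw [Finset.sum_range_succ (fun k => aOne k * (∑ i ∈ Finset.range (N + 1 - k + 1), g i))]
    rw [Finset.sum_range_succ (fun k => aOne k * g (N + 1 - k))]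
    have : ∀ k ∈ Finset.range (N + 1),
        aOne k * (∑ i ∈ Finset.range (N + 1 - k + 1), g i)
          = aOne k * (∑ i ∈ Finset.range (N - k + 1), g i) + aOne k * g (N + 1 - k) := by
      intro k hk
      have hkN : k ≤ N := Nat.lt_succ_iff.mp (Finset.mem_range.mp hk)
      have e : N + 1 - k = (N - k) + 1 := by omega
      rw [e, Finset.sum_range_succ, mul_add]
    rw [Finset.sum_congr rfl this, Finset.sum_add_distrib]
    simp
    ring



lemma sum_rpow_le {a : ℝ} (ha : 0 < a) (ha1 : a < 1) (n : ℕ) :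
    ∑ j ∈ Finset.range n, ((j : ℝ) + 1) ^ (-a) ≤ (n : ℝ) ^ (1 - a) / (1 - a) := by
  have hp0 : (0:ℝ) < 1 - a := by linarith
  induction n with
  | zero => simp [Real.zero_rpow (by linarith : (1:ℝ) - a ≠ 0)]
  | succ n ih =>
    rw [Finset.sum_range_succ]
    have key : (n : ℝ) ^ (1 - a) + (1 - a) * ((n : ℝ) + 1) ^ (-a) ≤ ((n : ℝ) + 1) ^ (1 - a) := by
      have hn1 : (0:ℝ) < (n : ℝ) + 1 := by positivity
      have hb := rpow_one_add_le_one_add_mul_self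
        (s := -(1 / ((n:ℝ) + 1))) (p := 1 - a)
        (by rw [neg_le, neg_neg]; rw [div_le_one hn1]; linarith)
        (by linarith) (by linarith)
      have e0 : (1 : ℝ) + -(1 / ((n:ℝ) + 1)) = (n : ℝ) / ((n:ℝ) + 1) := by
        field_simp
        ring
      rw [e0] at hb
      have hmul := mul_le_mul_of_nonneg_right hb (le_of_lt (rpow_pos_of_pos hn1 (1 - a)))
      have e1 : ((n:ℝ) / ((n:ℝ)+1)) ^ (1-a) * ((n:ℝ)+1) ^ (1-a) = (n:ℝ) ^ (1-a) := by
        rw [← Real.mul_rpow (by positivity) (by positivity), div_mul_cancel₀]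
        exact ne_of_gt hn1
      have e2 : ((n:ℝ)+1) ^ (1-a) / ((n:ℝ)+1) = ((n:ℝ)+1) ^ (-a) := by
        rw [div_eq_iff (ne_of_gt hn1), show (1:ℝ) - a = -a + 1 by ring,
          Real.rpow_add hn1, Real.rpow_one]
      rw [e1] at hmul
      have e3 : (1 + (1 - a) * -(1 / ((n:ℝ) + 1))) * ((n:ℝ)+1) ^ (1-a)
          = ((n:ℝ)+1) ^ (1-a) - (1-a) * (((n:ℝ)+1) ^ (1-a) / ((n:ℝ)+1)) := by
        ring
      rw [e3, e2] at hmul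
      linarith
    have := add_le_add ih (le_refl (((n:ℝ)+1) ^ (-a)))
    refine this.trans ?_
    push_cast
    rw [div_add' _ _ _ (ne_of_gt hp0), div_le_div_iff_of_pos_right hp0]
    linarith

lemma log_pow_le (r : ℕ) (n : ℕ) (hn : 1 ≤ n) :
    (Real.log n) ^ r ≤ (8 * r : ℝ) ^ r * (n : ℝ) ^ ((1:ℝ)/8) := by
  have hn1 : (1:ℝ) ≤ (n:ℝ) := by exact_mod_cast hn
  have hn0 : (0:ℝ) < (n:ℝ) := by linarith
  rcases Nat.eq_zero_or_pos r with hr | hr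
  · subst hr
    simpa using Real.one_le_rpow hn1 (by norm_num)
  · have hr0 : (0:ℝ) < (r:ℝ) := by exact_mod_cast hr
    have hδ : (0:ℝ) < 1 / (8 * r) := by positivity
    have hlog : Real.log n ≤ (8 * r : ℝ) * (n : ℝ) ^ (1 / (8 * (r:ℝ))) := by
      have h1 : Real.log ((n:ℝ) ^ (1 / (8 * (r:ℝ)))) = (1 / (8 * (r:ℝ))) * Real.log n :=
        Real.log_rpow hn0 _
      have h2 : Real.log ((n:ℝ) ^ (1 / (8 * (r:ℝ)))) ≤ (n:ℝ) ^ (1 / (8 * (r:ℝ))) - 1 :=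
        Real.log_le_sub_one_of_pos (rpow_pos_of_pos hn0 _)
      have h3 : (1 / (8 * (r:ℝ))) * Real.log n ≤ (n:ℝ) ^ (1 / (8 * (r:ℝ))) := by
        rw [← h1]; linarith
      calc Real.log n = (8 * (r:ℝ)) * ((1 / (8 * (r:ℝ))) * Real.log n) := by
            field_simp
        _ ≤ (8 * (r:ℝ)) * (n:ℝ) ^ (1 / (8 * (r:ℝ))) := by
            apply mul_le_mul_of_nonneg_left h3 (by positivity)
    have hlogn : 0 ≤ Real.log n := Real.log_nonneg hn1
    have := pow_le_pow_left₀ hlogn hlog r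
    refine this.trans ?_
    rw [mul_pow, ← Real.rpow_natCast ((n:ℝ) ^ (1 / (8 * (r:ℝ)))) r, ← Real.rpow_mul hn0.le]
    have : 1 / (8 * (r:ℝ)) * (r:ℝ) = 1/8 := by
      field_simp
    rw [this]




lemma half_div_rpow_le {a : ℝ} (ha : 0 ≤ a) (ha1 : a ≤ 1) {x : ℝ} (hx : 0 < x) :
    (x / 2) ^ (-a) ≤ 2 * x ^ (-a) := by
  rw [Real.div_rpow hx.le (by norm_num)]
  rw [Real.rpow_neg (by norm_num : (0:ℝ) ≤ 2), div_eq_mul_inv, inv_inv]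
  have h2 : (2:ℝ) ^ a ≤ 2 := by
    calc (2:ℝ) ^ a ≤ (2:ℝ) ^ (1:ℝ) := Real.rpow_le_rpow_of_exponent_le (by norm_num) ha1
      _ = 2 := Real.rpow_one 2
  nlinarith [mul_le_mul_of_nonneg_left h2 (Real.rpow_nonneg hx.le (-a))]

lemma conv_bound (N : ℕ) :
    ∑ k ∈ Finset.range (N + 1), ((k:ℝ) + 1) ^ (-(1:ℝ)/2) * (((N - k : ℕ):ℝ) + 1) ^ (-(3:ℝ)/4)
      ≤ 12 * ((N:ℝ) + 1) ^ (-(1:ℝ)/4) := by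
  have hN1 : (0:ℝ) < (N:ℝ) + 1 := by positivity
  have hhalf : (0:ℝ) < ((N:ℝ) + 1) / 2 := by positivity
  -- termwise bound
  have hterm : ∀ k ∈ Finset.range (N + 1),
      ((k:ℝ) + 1) ^ (-(1:ℝ)/2) * (((N - k : ℕ):ℝ) + 1) ^ (-(3:ℝ)/4)
        ≤ (((N:ℝ)+1)/2) ^ (-(1:ℝ)/2) * (((N - k : ℕ):ℝ) + 1) ^ (-(3:ℝ)/4)
          + ((k:ℝ) + 1) ^ (-(1:ℝ)/2) * (((N:ℝ)+1)/2) ^ (-(3:ℝ)/4) := by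
    intro k hk
    have hkN : k ≤ N := Nat.lt_succ_iff.mp (Finset.mem_range.mp hk)
    have hcast : ((N - k : ℕ):ℝ) = (N:ℝ) - (k:ℝ) := by
      push_cast [Nat.cast_sub hkN]; ring
    have hx : (0:ℝ) < (k:ℝ) + 1 := by positivity
    have hy : (0:ℝ) < ((N - k : ℕ):ℝ) + 1 := by positivity
    have hsum2 : ((k:ℝ) + 1) + (((N - k : ℕ):ℝ) + 1) = (N:ℝ) + 2 := by
      rw [hcast]; ring
    have hT1 : (0:ℝ) ≤ (((N:ℝ)+1)/2) ^ (-(1:ℝ)/2) * (((N - k : ℕ):ℝ) + 1) ^ (-(3:ℝ)/4) :=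
      mul_nonneg (Real.rpow_nonneg hhalf.le _) (Real.rpow_nonneg hy.le _)
    have hT2 : (0:ℝ) ≤ ((k:ℝ) + 1) ^ (-(1:ℝ)/2) * (((N:ℝ)+1)/2) ^ (-(3:ℝ)/4) :=
      mul_nonneg (Real.rpow_nonneg hx.le _) (Real.rpow_nonneg hhalf.le _)
    rcases le_or_gt (((N:ℝ)+1)/2) ((k:ℝ) + 1) with hbig | hsmall
    · have h1 : ((k:ℝ) + 1) ^ (-(1:ℝ)/2) ≤ (((N:ℝ)+1)/2) ^ (-(1:ℝ)/2) :=
        Real.rpow_le_rpow_of_nonpos hhalf hbig (by norm_num)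
      nlinarith [mul_le_mul_of_nonneg_right h1 (Real.rpow_nonneg hy.le (-(3:ℝ)/4))]
    · have hbig' : (((N:ℝ)+1)/2) ≤ ((N - k : ℕ):ℝ) + 1 := by linarith
      have h1 : (((N - k : ℕ):ℝ) + 1) ^ (-(3:ℝ)/4) ≤ (((N:ℝ)+1)/2) ^ (-(3:ℝ)/4) :=
        Real.rpow_le_rpow_of_nonpos hhalf hbig' (by norm_num)
      nlinarith [mul_le_mul_of_nonneg_left h1 (Real.rpow_nonneg hx.le (-(1:ℝ)/2))]
  have hsum := Finset.sum_le_sum hterm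
  rw [Finset.sum_add_distrib, ← Finset.mul_sum, ← Finset.sum_mul] at hsum
  -- reflect the second factor sum
  have hrefl : ∑ k ∈ Finset.range (N + 1), (((N - k : ℕ):ℝ) + 1) ^ (-(3:ℝ)/4)
      = ∑ j ∈ Finset.range (N + 1), ((j:ℝ) + 1) ^ (-(3:ℝ)/4) := by
    have := Finset.sum_range_reflect (fun j => ((j:ℝ) + 1) ^ (-(3:ℝ)/4)) (N + 1)
    simpa using this
  rw [hrefl] at hsum
  have hs34 : ∑ j ∈ Finset.range (N + 1), ((j:ℝ) + 1) ^ (-(3:ℝ)/4)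
      ≤ 4 * ((N:ℝ) + 1) ^ ((1:ℝ)/4) := by
    have := sum_rpow_le (a := 3/4) (by norm_num) (by norm_num) (N + 1)
    push_cast at this ⊢
    calc ∑ j ∈ Finset.range (N + 1), ((j:ℝ) + 1) ^ (-(3:ℝ)/4)
        = ∑ j ∈ Finset.range (N + 1), ((j:ℝ) + 1) ^ (-(3/4:ℝ)) := by norm_num
      _ ≤ ((N:ℝ) + 1) ^ (1 - (3/4:ℝ)) / (1 - (3/4:ℝ)) := this
      _ = 4 * ((N:ℝ) + 1) ^ ((1:ℝ)/4) := by
          rw [show (1:ℝ) - 3/4 = 1/4 by norm_num, div_eq_mul_inv]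
          norm_num [mul_comm]
  have hs12 : ∑ k ∈ Finset.range (N + 1), ((k:ℝ) + 1) ^ (-(1:ℝ)/2)
      ≤ 2 * ((N:ℝ) + 1) ^ ((1:ℝ)/2) := by
    have := sum_rpow_le (a := 1/2) (by norm_num) (by norm_num) (N + 1)
    push_cast at this ⊢
    calc ∑ k ∈ Finset.range (N + 1), ((k:ℝ) + 1) ^ (-(1:ℝ)/2)
        = ∑ k ∈ Finset.range (N + 1), ((k:ℝ) + 1) ^ (-(1/2:ℝ)) := by norm_num
      _ ≤ ((N:ℝ) + 1) ^ (1 - (1/2:ℝ)) / (1 - (1/2:ℝ)) := this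
      _ = 2 * ((N:ℝ) + 1) ^ ((1:ℝ)/2) := by
          rw [show (1:ℝ) - 1/2 = 1/2 by norm_num, div_eq_mul_inv]
          norm_num [mul_comm]
  have hh1 : (((N:ℝ)+1)/2) ^ (-(1:ℝ)/2) ≤ 2 * ((N:ℝ)+1) ^ (-(1:ℝ)/2) := by
    have := half_div_rpow_le (a := 1/2) (by norm_num) (by norm_num) hN1
    convert this using 2 <;> norm_num
  have hh2 : (((N:ℝ)+1)/2) ^ (-(3:ℝ)/4) ≤ 2 * ((N:ℝ)+1) ^ (-(3:ℝ)/4) := by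
    have := half_div_rpow_le (a := 3/4) (by norm_num) (by norm_num) hN1
    convert this using 2 <;> norm_num
  -- combine
  have e1 : ((N:ℝ)+1) ^ (-(1:ℝ)/2) * ((N:ℝ)+1) ^ ((1:ℝ)/4) = ((N:ℝ)+1) ^ (-(1:ℝ)/4) := by
    rw [← Real.rpow_add hN1]; norm_num
  have e2 : ((N:ℝ)+1) ^ (-(3:ℝ)/4) * ((N:ℝ)+1) ^ ((1:ℝ)/2) = ((N:ℝ)+1) ^ (-(1:ℝ)/4) := by
    rw [← Real.rpow_add hN1]; norm_num
  have hA : (((N:ℝ)+1)/2) ^ (-(1:ℝ)/2) * ∑ j ∈ Finset.range (N + 1), ((j:ℝ) + 1) ^ (-(3:ℝ)/4)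
      ≤ 8 * ((N:ℝ)+1) ^ (-(1:ℝ)/4) := by
    calc (((N:ℝ)+1)/2) ^ (-(1:ℝ)/2) * ∑ j ∈ Finset.range (N + 1), ((j:ℝ) + 1) ^ (-(3:ℝ)/4)
        ≤ (2 * ((N:ℝ)+1) ^ (-(1:ℝ)/2)) * (4 * ((N:ℝ) + 1) ^ ((1:ℝ)/4)) := by
          apply mul_le_mul hh1 hs34 (Finset.sum_nonneg fun j _ => Real.rpow_nonneg (by positivity) _)
            (by positivity)
      _ = 8 * (((N:ℝ)+1) ^ (-(1:ℝ)/2) * ((N:ℝ)+1) ^ ((1:ℝ)/4)) := by ring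
      _ = 8 * ((N:ℝ)+1) ^ (-(1:ℝ)/4) := by rw [e1]
  have hB : (∑ k ∈ Finset.range (N + 1), ((k:ℝ) + 1) ^ (-(1:ℝ)/2)) * (((N:ℝ)+1)/2) ^ (-(3:ℝ)/4)
      ≤ 4 * ((N:ℝ)+1) ^ (-(1:ℝ)/4) := by
    calc (∑ k ∈ Finset.range (N + 1), ((k:ℝ) + 1) ^ (-(1:ℝ)/2)) * (((N:ℝ)+1)/2) ^ (-(3:ℝ)/4)
        ≤ (2 * ((N:ℝ) + 1) ^ ((1:ℝ)/2)) * (2 * ((N:ℝ)+1) ^ (-(3:ℝ)/4)) := by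
          apply mul_le_mul hs12 hh2 (Real.rpow_nonneg hhalf.le _) (by positivity)
      _ = 4 * (((N:ℝ)+1) ^ (-(3:ℝ)/4) * ((N:ℝ)+1) ^ ((1:ℝ)/2)) := by ring
      _ = 4 * ((N:ℝ)+1) ^ (-(1:ℝ)/4) := by rw [e2]
  linarith





lemma aOne_le_rpow (k : ℕ) : aOne k ≤ ((k:ℝ) + 1) ^ (-(1:ℝ)/2) := by
  have : ((k:ℝ) + 1) ^ (-(1:ℝ)/2) = 1 / Real.sqrt ((k:ℝ) + 1) := by
    rw [neg_div, Real.rpow_neg (by positivity), one_div, Real.sqrt_eq_rpow]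
    norm_num
  rw [this]
  exact aOne_le_sqrt k

lemma split_rpow (i j : ℕ) :
    ((i:ℝ) + (j:ℝ) + 1) ^ (-((15:ℝ)/8)) ≤ ((i:ℝ) + 1) ^ (-(9:ℝ)/8) * ((j:ℝ) + 1) ^ (-(3:ℝ)/4) := by
  have hx : (0:ℝ) < (i:ℝ) + 1 := by positivity
  have hy : (0:ℝ) < (j:ℝ) + 1 := by positivity
  have hz : (0:ℝ) < (i:ℝ) + (j:ℝ) + 1 := by positivity
  have hxz : (i:ℝ) + 1 ≤ (i:ℝ) + (j:ℝ) + 1 := by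
    have : (0:ℝ) ≤ (j:ℝ) := Nat.cast_nonneg j
    linarith
  have hyz : (j:ℝ) + 1 ≤ (i:ℝ) + (j:ℝ) + 1 := by
    have : (0:ℝ) ≤ (i:ℝ) := Nat.cast_nonneg i
    linarith
  have key : ((i:ℝ) + 1) ^ ((9:ℝ)/8) * ((j:ℝ) + 1) ^ ((3:ℝ)/4)
      ≤ ((i:ℝ) + (j:ℝ) + 1) ^ ((15:ℝ)/8) := by
    calc ((i:ℝ) + 1) ^ ((9:ℝ)/8) * ((j:ℝ) + 1) ^ ((3:ℝ)/4)
        ≤ ((i:ℝ) + (j:ℝ) + 1) ^ ((9:ℝ)/8) * ((i:ℝ) + (j:ℝ) + 1) ^ ((3:ℝ)/4) := by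
          apply mul_le_mul (Real.rpow_le_rpow hx.le hxz (by norm_num))
            (Real.rpow_le_rpow hy.le hyz (by norm_num))
            (Real.rpow_nonneg hy.le _) (Real.rpow_nonneg hz.le _)
      _ = ((i:ℝ) + (j:ℝ) + 1) ^ ((15:ℝ)/8) := by
          rw [← Real.rpow_add hz]; norm_num
  have h1 : (0:ℝ) < ((i:ℝ) + 1) ^ ((9:ℝ)/8) * ((j:ℝ) + 1) ^ ((3:ℝ)/4) :=
    mul_pos (Real.rpow_pos_of_pos hx _) (Real.rpow_pos_of_pos hy _)
  have h2 := one_div_le_one_div_of_le h1 key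
  rw [Real.rpow_neg hz.le, ← one_div]
  calc 1 / ((i:ℝ) + (j:ℝ) + 1) ^ ((15:ℝ)/8)
      ≤ 1 / (((i:ℝ) + 1) ^ ((9:ℝ)/8) * ((j:ℝ) + 1) ^ ((3:ℝ)/4)) := h2
    _ = ((i:ℝ) + 1) ^ (-(9:ℝ)/8) * ((j:ℝ) + 1) ^ (-(3:ℝ)/4) := by
        rw [neg_div, Real.rpow_neg hx.le, neg_div, Real.rpow_neg hy.le, one_div,
          mul_inv]


set_option maxHeartbeats 1000000



/-- If `H ∈ H_m^r` with `m ≥ 1`, then the coefficients of `H(s)/√(1-s)` still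
sum to zero. -/
theorem stmt_12 (m r : ℕ) (hm : 1 ≤ m) (M : ℝ) (h : ℕ → ℝ)
    (h0 : |h 0| ≤ M) (h1 : |h 1| ≤ M)
    (hdec : ∀ n : ℕ, 2 ≤ n → |h n| ≤ M * (Real.log n) ^ r / (n : ℝ) ^ (((m : ℝ) + 3) / 2))
    (hsum : HasSum h 0) :
    Filter.Tendsto
      (fun N : ℕ => ∑ n ∈ Finset.range (N + 1), ∑ k ∈ Finset.range (n + 1), aOne k * h (n - k))
      Filter.atTop (nhds 0) := by
  have hM : 0 ≤ M := le_trans (abs_nonneg _) h0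
  set D : ℝ := M * (8 * r : ℝ) ^ r with hDdef
  have hD0 : 0 ≤ D := mul_nonneg hM (by positivity)
  have hsummable : Summable h := hsum.summable
  -- improved decay
  have hdec' : ∀ n : ℕ, 2 ≤ n → |h n| ≤ D * (n:ℝ) ^ (-((15:ℝ)/8)) := by
    intro n hn
    have hn1 : (1:ℝ) ≤ (n:ℝ) := by exact_mod_cast Nat.one_le_of_lt hn
    have hn0 : (0:ℝ) < (n:ℝ) := by linarith
    have hexp : (n:ℝ) ^ (2:ℝ) ≤ (n:ℝ) ^ (((m:ℝ) + 3) / 2) := by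
      apply Real.rpow_le_rpow_of_exponent_le hn1
      have : (1:ℝ) ≤ (m:ℝ) := by exact_mod_cast hm
      linarith
    have hnum : M * (Real.log n) ^ r ≤ D * (n:ℝ) ^ ((1:ℝ)/8) := by
      rw [hDdef, mul_assoc]
      exact mul_le_mul_of_nonneg_left (log_pow_le r n (by omega)) hM
    have hpos2 : (0:ℝ) < (n:ℝ) ^ (2:ℝ) := Real.rpow_pos_of_pos hn0 _
    have hposm : (0:ℝ) < (n:ℝ) ^ (((m:ℝ) + 3) / 2) := Real.rpow_pos_of_pos hn0 _
    calc |h n| ≤ M * (Real.log n) ^ r / (n : ℝ) ^ (((m : ℝ) + 3) / 2) := hdec n hn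
      _ ≤ (D * (n:ℝ) ^ ((1:ℝ)/8)) / (n:ℝ) ^ (2:ℝ) := by
          apply div_le_div₀ (by positivity) hnum hpos2 hexp
      _ = D * (n:ℝ) ^ (-((15:ℝ)/8)) := by
          rw [mul_div_assoc, ← Real.rpow_sub hn0]
          norm_num
  -- tail sum constant
  have hsC : Summable (fun i : ℕ => ((i:ℝ) + 1) ^ (-(9:ℝ)/8)) := by
    have : Summable (fun i : ℕ => ((i:ℝ)) ^ (-(9:ℝ)/8)) :=
      Real.summable_nat_rpow.mpr (by norm_num)
    have h2 := (summable_nat_add_iff 1).mpr this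
    apply h2.congr
    intro i
    push_cast
    norm_num
  set C0 : ℝ := ∑' i : ℕ, ((i:ℝ) + 1) ^ (-(9:ℝ)/8) with hC0def
  have hC0 : 0 ≤ C0 := tsum_nonneg fun i => Real.rpow_nonneg (by positivity) _
  set C1 : ℝ := M + D * C0 with hC1def
  have hC1 : 0 ≤ C1 := by positivity
  -- bound on partial-sum tails
  have hV : ∀ j : ℕ, |∑ i ∈ Finset.range (j + 1), h i| ≤ C1 * ((j:ℝ) + 1) ^ (-(3:ℝ)/4) := by
    intro j
    rcases Nat.eq_zero_or_pos j with rfl | hj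
    · rw [show (0:ℕ) + 1 = 1 from rfl, Finset.sum_range_one,
        show ((0:ℕ):ℝ) + 1 = 1 by norm_num, Real.one_rpow, mul_one]
      have : 0 ≤ D * C0 := mul_nonneg hD0 hC0
      linarith
    · have e := Summable.sum_add_tsum_nat_add (f := h) (j + 1) hsummable
      rw [hsum.tsum_eq] at e
      have e2 : ∑ i ∈ Finset.range (j + 1), h i = -∑' i, h (i + (j + 1)) := by linarith
      have habs : Summable (fun i => |h (i + (j + 1))|) :=
        (summable_nat_add_iff (f := fun i => |h i|) (j + 1)).mpr (summable_abs_iff.mpr hsummable)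
      have hpt : ∀ i : ℕ, |h (i + (j + 1))|
          ≤ (D * ((j:ℝ) + 1) ^ (-(3:ℝ)/4)) * ((i:ℝ) + 1) ^ (-(9:ℝ)/8) := by
        intro i
        have hge : 2 ≤ i + (j + 1) := by omega
        have := hdec' (i + (j + 1)) hge
        have hc : ((i + (j + 1) : ℕ):ℝ) = (i:ℝ) + (j:ℝ) + 1 := by push_cast; ring
        rw [hc] at this
        calc |h (i + (j + 1))| ≤ D * ((i:ℝ) + (j:ℝ) + 1) ^ (-((15:ℝ)/8)) := this
          _ ≤ D * (((i:ℝ) + 1) ^ (-(9:ℝ)/8) * ((j:ℝ) + 1) ^ (-(3:ℝ)/4)) :=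
              mul_le_mul_of_nonneg_left (split_rpow i j) hD0
          _ = (D * ((j:ℝ) + 1) ^ (-(3:ℝ)/4)) * ((i:ℝ) + 1) ^ (-(9:ℝ)/8) := by ring
      have hsRHS : Summable (fun i : ℕ =>
          (D * ((j:ℝ) + 1) ^ (-(3:ℝ)/4)) * ((i:ℝ) + 1) ^ (-(9:ℝ)/8)) := hsC.mul_left _
      calc |∑ i ∈ Finset.range (j + 1), h i| = |∑' i, h (i + (j + 1))| := by
            rw [e2, abs_neg]
        _ ≤ ∑' i, |h (i + (j + 1))| := by
            simpa [Real.norm_eq_abs] using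
              norm_tsum_le_tsum_norm (f := fun i => h (i + (j + 1))) (by simpa [Real.norm_eq_abs] using habs)
        _ ≤ ∑' (i : ℕ), (D * ((j:ℝ) + 1) ^ (-(3:ℝ)/4)) * ((i:ℝ) + 1) ^ (-(9:ℝ)/8) :=
            habs.tsum_le_tsum hpt hsRHS
        _ = (D * ((j:ℝ) + 1) ^ (-(3:ℝ)/4)) * C0 := by rw [tsum_mul_left]
        _ ≤ C1 * ((j:ℝ) + 1) ^ (-(3:ℝ)/4) := by
            have hr : (0:ℝ) ≤ ((j:ℝ) + 1) ^ (-(3:ℝ)/4) := Real.rpow_nonneg (by positivity) _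
            rw [hC1def]
            nlinarith
  -- final bound
  have hbound : ∀ N : ℕ,
      |∑ n ∈ Finset.range (N + 1), ∑ k ∈ Finset.range (n + 1), aOne k * h (n - k)|
        ≤ 12 * C1 * ((N:ℝ) + 1) ^ (-(1:ℝ)/4) := by
    intro N
    rw [swap_sum h N]
    calc |∑ k ∈ Finset.range (N + 1), aOne k * (∑ i ∈ Finset.range (N - k + 1), h i)|
        ≤ ∑ k ∈ Finset.range (N + 1), |aOne k * (∑ i ∈ Finset.range (N - k + 1), h i)| :=
          Finset.abs_sum_le_sum_abs _ _
      _ ≤ ∑ k ∈ Finset.range (N + 1),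
            ((k:ℝ) + 1) ^ (-(1:ℝ)/2) * (C1 * (((N - k : ℕ):ℝ) + 1) ^ (-(3:ℝ)/4)) := by
          apply Finset.sum_le_sum
          intro k hk
          rw [abs_mul, abs_of_nonneg (aOne_nonneg k)]
          exact mul_le_mul (aOne_le_rpow k) (hV (N - k)) (abs_nonneg _)
            (Real.rpow_nonneg (by positivity) _)
      _ = C1 * ∑ k ∈ Finset.range (N + 1),
            ((k:ℝ) + 1) ^ (-(1:ℝ)/2) * (((N - k : ℕ):ℝ) + 1) ^ (-(3:ℝ)/4) := by
          rw [Finset.mul_sum]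
          apply Finset.sum_congr rfl
          intro k _
          ring
      _ ≤ C1 * (12 * ((N:ℝ) + 1) ^ (-(1:ℝ)/4)) :=
          mul_le_mul_of_nonneg_left (conv_bound N) hC1
      _ = 12 * C1 * ((N:ℝ) + 1) ^ (-(1:ℝ)/4) := by ring
  -- squeeze
  have htend : Filter.Tendsto (fun N : ℕ => 12 * C1 * ((N:ℝ) + 1) ^ (-(1:ℝ)/4))
      Filter.atTop (nhds 0) := by
    have h2 : Filter.Tendsto (fun x : ℝ => x ^ (-(1:ℝ)/4)) Filter.atTop (nhds 0) := by
      have := tendsto_rpow_neg_atTop (y := (1:ℝ)/4) (by norm_num)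
      apply this.congr'
      filter_upwards with x
      norm_num
    have h3 : Filter.Tendsto (fun N : ℕ => ((N:ℝ) + 1)) Filter.atTop Filter.atTop :=
      Filter.tendsto_atTop_add_const_right _ 1 tendsto_natCast_atTop_atTop
    have h4 := (h2.comp h3).const_mul (12 * C1)
    simpa using h4
  exact squeeze_zero_norm (fun N => by simpa [Real.norm_eq_abs] using hbound N) htend
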